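/- arXiv:2102.12246 — 2 statements merged into one kernel-verified Lean document; each statement's English description precedes it below -/
import Mathlib

section
/- For the genus-g curve X, with [X] = 1 + h¹(X) + L in the completed Grothendieck ring of varieties, and P_X(x) = Σ_{i=0}^{2g} λ^i(h¹(X)) x^i the motivic Poincaré polynomial, one has for every n ≥ 0: λ^n([X]) = coeff_{x^0} P_X(x) / ((1−x)(1−Lx)x^n), i.e. the class [Sym^n X] of the n-th symmetric power equals the coefficient of x^n in the motivic zeta function Z(X,x) = P_X(x)/((1−x)(1−Lx)). -/
/-!
The addition formula for `λ` says exactly that `a ↦ Σ λⁿ(a) xⁿ` turns sums into products of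
power series. Since `[X] = 1 + h¹(X) + 𝕃`, the series of `[X]` is the product of the series of
`1`, of `h¹(X)` and of `𝕃`, which are `(1 - x)⁻¹`, `P_X(x)` (as `λⁿ(h¹) = 0` for `n > 2g`) and
`(1 - 𝕃x)⁻¹`.
-/

namespace PowerSeries

variable {R : Type*} [CommSemiring R] (lam : ℕ → R → R)

def lambdaSeries (a : R) : R⟦X⟧ :=
  mk fun n => lam n a

variable {lam}

theorem lambdaSeries_add
    (hadd : ∀ (n : ℕ) (a b : R),
      lam n (a + b) = ∑ p ∈ Finset.HasAntidiagonal.antidiagonal n, lam p.1 a * lam p.2 b)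
    (a b : R) : lambdaSeries lam (a + b) = lambdaSeries lam a * lambdaSeries lam b := by
  ext n
  simp only [lambdaSeries, coeff_mul, coeff_mk, hadd]

theorem lambdaSeries_eq_of_forall_lt {a : R} {d : ℕ} (hvan : ∀ n, d < n → lam n a = 0) :
    lambdaSeries lam a = mk fun i => if i ≤ d then lam i a else 0 := by
  ext n
  by_cases hn : n ≤ d
  · simp [lambdaSeries, hn]
  · simp [lambdaSeries, hn, hvan n (not_le.mp hn)]

end PowerSeries

open PowerSeries in
theorem symmetric_power_motive_from_zeta_general
    {R : Type*} [CommRing R]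
    (𝕃 h1 clsX : R) (lam : ℕ → R → R) (g : ℕ)
    (hX : clsX = 1 + h1 + 𝕃)
    (hadd : ∀ (n : ℕ) (a b : R),
        lam n (a + b) = ∑ p ∈ Finset.HasAntidiagonal.antidiagonal n, lam p.1 a * lam p.2 b)
    (hone : ∀ n : ℕ, lam n (1 : R) = 1)
    (hL : ∀ n : ℕ, lam n 𝕃 = 𝕃 ^ n)
    (hvan : ∀ n : ℕ, 2 * g < n → lam n h1 = 0) :
    ∀ n : ℕ, lam n clsX
      = PowerSeries.coeff n
          ((PowerSeries.mk fun i => if i ≤ 2 * g then lam i h1 else 0)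
            * (PowerSeries.mk fun _ => (1 : R))
            * (PowerSeries.mk fun j => 𝕃 ^ j)) := by
  intro n
  have hseries : lambdaSeries lam clsX
      = lambdaSeries lam 1 * lambdaSeries lam h1 * lambdaSeries lam 𝕃 := by
    rw [hX, lambdaSeries_add hadd, lambdaSeries_add hadd]
  have hseriesH : lambdaSeries lam h1 = mk fun i => if i ≤ 2 * g then lam i h1 else 0 :=
    lambdaSeries_eq_of_forall_lt hvan
  have hseries1 : lambdaSeries lam 1 = mk fun _ => (1 : R) := by simp only [lambdaSeries, hone]
  have hseriesL : lambdaSeries lam 𝕃 = mk fun j => 𝕃 ^ j := by simp only [lambdaSeries, hL]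
  rw [← hseriesH, ← hseries1, ← hseriesL, mul_comm (lambdaSeries lam h1), ← hseries,
    lambdaSeries, coeff_mk]

theorem symmetric_power_motive_from_zeta
    {R : Type*} [CommRing R]
    (𝕃 h1 clsX : R) (lam : ℕ → R → R) (g : ℕ)
    (hX : clsX = 1 + h1 + 𝕃)
    (hlam0 : ∀ a : R, lam 0 a = 1)
    (hadd : ∀ (n : ℕ) (a b : R),
        lam n (a + b) = ∑ p ∈ Finset.HasAntidiagonal.antidiagonal n, lam p.1 a * lam p.2 b)
    (hone : ∀ n : ℕ, lam n (1 : R) = 1)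
    (hL : ∀ n : ℕ, lam n 𝕃 = 𝕃 ^ n)
    (hfun : ∀ n : ℕ, n ≤ 2 * g → 𝕃 ^ g * lam n h1 = 𝕃 ^ n * lam (2 * g - n) h1)
    (hvan : ∀ n : ℕ, 2 * g < n → lam n h1 = 0) :
    ∀ n : ℕ, lam n clsX
      = PowerSeries.coeff n
          ((PowerSeries.mk fun i => if i ≤ 2 * g then lam i h1 else 0)
            * (PowerSeries.mk fun _ => (1 : R))
            * (PowerSeries.mk fun j => 𝕃 ^ j)) :=
  symmetric_power_motive_from_zeta_general 𝕃 h1 clsX lam g hX hadd hone hL hvan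
end

section
/- Let E: K̂(Var_C) → Z[u,v][[1/uv]] be the E-polynomial ring homomorphism. For the genus-g curve X and every integer k ≥ 0, E(P_X(L^k)) = (1 − u^{k+1}v^k)^g (1 − u^k v^{k+1})^g, where P_X(x) = Σ_{i=0}^{2g} λ^i(h¹(X)) x^i. -/
/-!
Up to sign, the sum defining `E(λⁱ(h¹))` is the coefficient of `Tⁱ` in
`(1 - uT)^g (1 - vT)^g`. Multiplying it by `E(𝕃^{ki}) = (uv)^{ki}` turns it into the
coefficient of `Tⁱ` in `(1 - u^{k+1}v^k T)^g (1 - u^k v^{k+1} T)^g`, a polynomial of degree at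
most `2g`, so the sum over `i ≤ 2g` is that polynomial evaluated at `T = 1`.
-/

open Finset

namespace Polynomial

variable {R : Type*} [CommRing R]

theorem coeff_one_sub_C_mul_X_pow (a : R) (n i : ℕ) :
    ((1 - C a * X) ^ n).coeff i = n.choose i * (-a) ^ i := by
  have hcomp : (1 - C a * X) ^ n = ((1 + X) ^ n).comp (C (-a) * X) := by
    simp [sub_eq_add_neg]
  rw [hcomp, comp_C_mul_X_coeff, coeff_one_add_X_pow]

theorem coeff_one_sub_C_mul_X_pow_mul_one_sub_C_mul_X_pow (a b : R) (n i : ℕ) :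
    ((1 - C a * X) ^ n * (1 - C b * X) ^ n).coeff i
      = ∑ p ∈ range (i + 1), (-1) ^ i * ((n.choose p * n.choose (i - p) : ℕ) : R)
          * a ^ p * b ^ (i - p) := by
  rw [coeff_mul, Nat.sum_antidiagonal_eq_sum_range_succ_mk]
  refine sum_congr rfl fun p hp => ?_
  obtain ⟨q, rfl⟩ := Nat.exists_eq_add_of_le (Nat.lt_succ_iff.mp (mem_range.mp hp))
  simp only [coeff_one_sub_C_mul_X_pow, Nat.add_sub_cancel_left]
  push_cast
  ring

theorem natDegree_one_sub_C_mul_X_pow_mul_one_sub_C_mul_X_pow_le (a b : R) (n : ℕ) :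
    ((1 - C a * X) ^ n * (1 - C b * X) ^ n).natDegree ≤ 2 * n := by
  compute_degree!
  omega

end Polynomial

open Polynomial in
theorem one_sub_pow_mul_one_sub_pow_eq_sum {R : Type*} [CommRing R] (a b : R) (n : ℕ) :
    (1 - a) ^ n * (1 - b) ^ n
      = ∑ i ∈ range (2 * n + 1), ∑ p ∈ range (i + 1),
          (-1) ^ i * ((n.choose p * n.choose (i - p) : ℕ) : R) * a ^ p * b ^ (i - p) := by
  have hdeg := natDegree_one_sub_C_mul_X_pow_mul_one_sub_C_mul_X_pow_le a b n
  have heval := eval_eq_sum_range' (Nat.lt_succ_of_le hdeg) 1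
  simpa [coeff_one_sub_C_mul_X_pow_mul_one_sub_C_mul_X_pow] using heval

theorem pow_mul_pow_mul_mul_pow {S : Type*} [CommSemiring S] (u v : S) (k : ℕ) {p i : ℕ}
    (hpi : p ≤ i) :
    u ^ p * v ^ (i - p) * (u * v) ^ (k * i)
      = (u ^ (k + 1) * v ^ k) ^ p * (u ^ k * v ^ (k + 1)) ^ (i - p) := by
  obtain ⟨q, rfl⟩ := Nat.exists_eq_add_of_le hpi
  rw [Nat.add_sub_cancel_left]
  ring

theorem E_polynomial_PX_at_Lk
    {R S : Type*} [CommRing R] [CommRing S]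
    (Emap : R →+* S) (u v : S)
    (𝕃 h1 : R) (lam : ℕ → R → R) (g k : ℕ)
    (hEL : Emap 𝕃 = u * v)
    (hEP : ∀ i : ℕ, Emap (lam i h1)
        = ∑ p ∈ Finset.range (i + 1),
            (-1 : S) ^ i * ((Nat.choose g p * Nat.choose g (i - p) : ℕ) : S)
              * u ^ p * v ^ (i - p)) :
    Emap (∑ i ∈ Finset.range (2 * g + 1), lam i h1 * 𝕃 ^ (k * i))
      = (1 - u ^ (k + 1) * v ^ k) ^ g * (1 - u ^ k * v ^ (k + 1)) ^ g := by
  rw [one_sub_pow_mul_one_sub_pow_eq_sum, map_sum]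
  refine sum_congr rfl fun i _ => ?_
  rw [map_mul, map_pow, hEL, hEP, sum_mul]
  refine sum_congr rfl fun p hp => ?_
  simp only [mul_assoc]
  rw [← mul_assoc (u ^ p), pow_mul_pow_mul_mul_pow u v k (Nat.lt_succ_iff.mp (mem_range.mp hp))]
end
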